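/- Let ω ∈ 𝒟 and Ψ ∈ 𝓛, and define the weight W(z) = Ψ(1/(1−|z|))·ω(z). Then W ∈ 𝒟. -/
import Mathlib


open MeasureTheory Real Set

/-- `Ψ` is essentially increasing on `[0,∞)`. -/
def EssInc (Ψ : ℝ → ℝ) : Prop := ∃ C > (0:ℝ), ∀ x y : ℝ, 0 ≤ x → x ≤ y → Ψ x ≤ C * Ψ y

/-- `Ψ` is essentially decreasing on `[0,∞)`. -/
def EssDec (Ψ : ℝ → ℝ) : Prop := ∃ C > (0:ℝ), ∀ x y : ℝ, 0 ≤ x → x ≤ y → Ψ y ≤ C * Ψ x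

/-- The doubling property `Ψ(x) ≍ Ψ(x²)` on `[0,∞)`. -/
def Doubling (Ψ : ℝ → ℝ) : Prop :=
  ∃ c > (0:ℝ), ∃ C > (0:ℝ), ∀ x : ℝ, 0 ≤ x → c * Ψ (x ^ 2) ≤ Ψ x ∧ Ψ x ≤ C * Ψ (x ^ 2)

/-- The class `𝓛`: positive, essentially monotonic, doubling. -/
def InL (Ψ : ℝ → ℝ) : Prop :=
  (∀ x : ℝ, 0 ≤ x → 0 < Ψ x) ∧ (EssInc Ψ ∨ EssDec Ψ) ∧ Doubling Ψ

/-- Tail integral of a radial weight. -/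
noncomputable def omHat (ω : ℝ → ℝ) (r : ℝ) : ℝ := ∫ s in r..1, ω s

/-- The class `𝒟̂` of radial weights with doubling tails. -/
def Dhat (ω : ℝ → ℝ) : Prop :=
  ∃ C : ℝ, 1 ≤ C ∧ ∀ r ∈ Set.Ico (0:ℝ) 1, omHat ω r ≤ C * omHat ω ((1 + r) / 2)

/-- The class `𝒟̌` of radial weights with reverse-doubling tails. -/
def Dcheck (ω : ℝ → ℝ) : Prop :=
  ∃ K : ℝ, 1 < K ∧ ∃ C : ℝ, 1 < C ∧ ∀ r ∈ Set.Ico (0:ℝ) 1,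
    C * omHat ω (1 - (1 - r) / K) ≤ omHat ω r

/-- square-range comparison -/
lemma sq_comp {Ψ : ℝ → ℝ} (hΨ : InL Ψ) :
    ∃ A : ℝ, 1 ≤ A ∧ ∀ x y : ℝ, 1 ≤ x → x ≤ y → y ≤ x ^ 2 →
      Ψ y ≤ A * Ψ x ∧ Ψ x ≤ A * Ψ y := by
  obtain ⟨hpos, hmono, c, hc, Cd, hCd, hdbl⟩ := hΨ
  have hΨ1 : 0 < Ψ 1 := hpos 1 one_pos.le
  have h1 := hdbl 1 one_pos.le
  rw [one_pow] at h1
  have hc1 : c ≤ 1 := by nlinarith [h1.1]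
  have hCd1 : 1 ≤ Cd := by nlinarith [h1.2]
  have hcc : c * c⁻¹ = 1 := mul_inv_cancel₀ (ne_of_gt hc)
  have hcinv : 1 ≤ c⁻¹ := by nlinarith
  rcases hmono with ⟨Ci, hCi, hi⟩ | ⟨Ce, hCe, he⟩
  · have hCi1 : 1 ≤ Ci := by nlinarith [hi 1 1 one_pos.le le_rfl]
    refine ⟨Ci * c⁻¹, by nlinarith, fun x y hx hxy hyx2 => ?_⟩
    have hx0 : (0:ℝ) ≤ x := by linarith
    have hy0 : (0:ℝ) ≤ y := by linarith
    have hΨx : 0 < Ψ x := hpos x hx0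
    have hΨy : 0 < Ψ y := hpos y hy0
    have hΨx2 : Ψ (x^2) ≤ c⁻¹ * Ψ x := by nlinarith [(hdbl x hx0).1]
    constructor
    · calc Ψ y ≤ Ci * Ψ (x^2) := hi y (x^2) hy0 hyx2
        _ ≤ Ci * (c⁻¹ * Ψ x) := by nlinarith [hpos (x^2) (by positivity : (0:ℝ) ≤ x^2)]
        _ = Ci * c⁻¹ * Ψ x := by ring
    · calc Ψ x ≤ Ci * Ψ y := hi x y hx0 hxy
        _ ≤ Ci * c⁻¹ * Ψ y := by nlinarith [mul_nonneg (mul_nonneg hCi.le hΨy.le) (sub_nonneg.2 hcinv)]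
  · have hCe1 : 1 ≤ Ce := by nlinarith [he 1 1 one_pos.le le_rfl]
    refine ⟨Ce * Cd, by nlinarith, fun x y hx hxy hyx2 => ?_⟩
    have hx0 : (0:ℝ) ≤ x := by linarith
    have hy0 : (0:ℝ) ≤ y := by linarith
    have hΨy : 0 < Ψ y := hpos y hy0
    have hΨx : 0 < Ψ x := hpos x hx0
    constructor
    · calc Ψ y ≤ Ce * Ψ x := he x y hx0 hxy
        _ ≤ Ce * Cd * Ψ x := by nlinarith [mul_nonneg (mul_nonneg hCe.le hΨx.le) (sub_nonneg.2 hCd1)]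
    · calc Ψ x ≤ Cd * Ψ (x^2) := (hdbl x hx0).2
        _ ≤ Cd * (Ce * Ψ y) := by nlinarith [he y (x^2) hy0 hyx2, hpos (x^2) (by positivity : (0:ℝ) ≤ x^2)]
        _ = Ce * Cd * Ψ y := by ring

/-- iterated square-range comparison -/
lemma sq_iter {Ψ : ℝ → ℝ} (hΨ : InL Ψ) :
    ∃ A : ℝ, 1 ≤ A ∧ ∀ p : ℕ, ∀ x y : ℝ, 1 ≤ x → x ≤ y → y ≤ x ^ (2^p) →
      Ψ y ≤ A^(p+1) * Ψ x ∧ Ψ x ≤ A^(p+1) * Ψ y := by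
  obtain ⟨A, hA1, hA⟩ := sq_comp hΨ
  have hpos := hΨ.1
  refine ⟨A, hA1, fun p => ?_⟩
  induction p with
  | zero =>
    intro x y hx hxy hyx
    rw [pow_zero, pow_one] at hyx
    have hxy' : x = y := le_antisymm hxy hyx
    subst hxy'
    have hΨx : 0 < Ψ x := hpos x (by linarith)
    simp only [zero_add, pow_one]
    constructor <;> nlinarith
  | succ p ih =>
    intro x y hx hxy hyx
    have hx0 : (0:ℝ) ≤ x := by linarith
    have hA0 : (0:ℝ) < A := by linarith
    have hApow : (0:ℝ) < A^(p+1) := pow_pos hA0 _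
    have hΨx : 0 < Ψ x := hpos x hx0
    have hΨy : 0 < Ψ y := hpos y (by linarith)
    by_cases hcase : y ≤ x ^ (2^p)
    · obtain ⟨h1, h2⟩ := ih x y hx hxy hcase
      have hpow : A^(p+1) ≤ A^(p+1+1) := by
        calc A^(p+1) = A^(p+1) * 1 := by ring
          _ ≤ A^(p+1) * A := by nlinarith
          _ = A^(p+1+1) := by ring
      constructor <;> nlinarith
    · push_neg at hcase
      set z := x ^ (2^p) with hz
      have hz1 : 1 ≤ z := one_le_pow₀ hx
      have hxz : x ≤ z := le_self_pow₀ hx (by positivity)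
      have hyz2 : y ≤ z ^ 2 := by
        rw [hz, ← pow_mul]
        calc y ≤ x ^ (2^(p+1)) := hyx
          _ = x ^ (2^p * 2) := by rw [pow_succ]
      obtain ⟨hy1, hy2⟩ := hA z y hz1 hcase.le hyz2
      obtain ⟨hz1', hz2'⟩ := ih x z hx hxz le_rfl
      have hΨz : 0 < Ψ z := hpos z (by linarith)
      constructor
      · calc Ψ y ≤ A * Ψ z := hy1
          _ ≤ A * (A^(p+1) * Ψ x) := by nlinarith
          _ = A^(p+1+1) * Ψ x := by ring
      · calc Ψ x ≤ A^(p+1) * Ψ z := hz2'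
          _ ≤ A^(p+1) * (A * Ψ y) := by nlinarith
          _ = A^(p+1+1) * Ψ y := by ring

/-- comparison on `[1,2]` -/
lemma unit_comp {Ψ : ℝ → ℝ} (hΨ : InL Ψ) :
    ∃ E : ℝ, 1 ≤ E ∧ ∀ u v : ℝ, 1 ≤ u → u ≤ 2 → 1 ≤ v → v ≤ 2 → Ψ u ≤ E * Ψ v := by
  obtain ⟨hpos, hmono, -⟩ := hΨ
  have hΨ1 : 0 < Ψ 1 := hpos 1 one_pos.le
  have hΨ2 : 0 < Ψ 2 := hpos 2 two_pos.le
  rcases hmono with ⟨Ci, hCi, hi⟩ | ⟨Ce, hCe, he⟩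
  · refine ⟨max 1 (Ci * Ψ 2 * Ci * (Ψ 1)⁻¹), le_max_left _ _, fun u v hu hu2 hv hv2 => ?_⟩
    have hΨv : 0 < Ψ v := hpos v (by linarith)
    have h1 : Ψ u ≤ Ci * Ψ 2 := hi u 2 (by linarith) hu2
    have h2 : Ψ 1 ≤ Ci * Ψ v := hi 1 v one_pos.le hv
    have t : Ci * Ψ 2 * (Ψ 1)⁻¹ * Ψ 1 ≤ Ci * Ψ 2 * (Ψ 1)⁻¹ * (Ci * Ψ v) :=
      mul_le_mul_of_nonneg_left h2 (by positivity)
    have hinv : (Ψ 1)⁻¹ * Ψ 1 = 1 := inv_mul_cancel₀ (ne_of_gt hΨ1)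
    have t2 : Ci * Ψ 2 ≤ Ci * Ψ 2 * Ci * (Ψ 1)⁻¹ * Ψ v := by
      calc Ci * Ψ 2 = Ci * Ψ 2 * ((Ψ 1)⁻¹ * Ψ 1) := by rw [hinv]; ring
        _ = Ci * Ψ 2 * (Ψ 1)⁻¹ * Ψ 1 := by ring
        _ ≤ Ci * Ψ 2 * (Ψ 1)⁻¹ * (Ci * Ψ v) := t
        _ = Ci * Ψ 2 * Ci * (Ψ 1)⁻¹ * Ψ v := by ring
    calc Ψ u ≤ Ci * Ψ 2 * Ci * (Ψ 1)⁻¹ * Ψ v := le_trans h1 t2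
      _ ≤ max 1 (Ci * Ψ 2 * Ci * (Ψ 1)⁻¹) * Ψ v :=
        mul_le_mul_of_nonneg_right (le_max_right _ _) hΨv.le
  · refine ⟨max 1 (Ce * Ψ 1 * Ce * (Ψ 2)⁻¹), le_max_left _ _, fun u v hu hu2 hv hv2 => ?_⟩
    have hΨv : 0 < Ψ v := hpos v (by linarith)
    have h1 : Ψ u ≤ Ce * Ψ 1 := he 1 u one_pos.le hu
    have h2 : Ψ 2 ≤ Ce * Ψ v := he v 2 (by linarith) hv2
    have t : Ce * Ψ 1 * (Ψ 2)⁻¹ * Ψ 2 ≤ Ce * Ψ 1 * (Ψ 2)⁻¹ * (Ce * Ψ v) :=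
      mul_le_mul_of_nonneg_left h2 (by positivity)
    have hinv : (Ψ 2)⁻¹ * Ψ 2 = 1 := inv_mul_cancel₀ (ne_of_gt hΨ2)
    have t2 : Ce * Ψ 1 ≤ Ce * Ψ 1 * Ce * (Ψ 2)⁻¹ * Ψ v := by
      calc Ce * Ψ 1 = Ce * Ψ 1 * ((Ψ 2)⁻¹ * Ψ 2) := by rw [hinv]; ring
        _ = Ce * Ψ 1 * (Ψ 2)⁻¹ * Ψ 2 := by ring
        _ ≤ Ce * Ψ 1 * (Ψ 2)⁻¹ * (Ce * Ψ v) := t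
        _ = Ce * Ψ 1 * Ce * (Ψ 2)⁻¹ * Ψ v := by ring
    calc Ψ u ≤ Ce * Ψ 1 * Ce * (Ψ 2)⁻¹ * Ψ v := le_trans h1 t2
      _ ≤ max 1 (Ce * Ψ 1 * Ce * (Ψ 2)⁻¹) * Ψ v :=
        mul_le_mul_of_nonneg_right (le_max_right _ _) hΨv.le

/-- ratio bound for `x ≥ 2` -/
lemma ratio2 {Ψ : ℝ → ℝ} (hΨ : InL Ψ) :
    ∃ D : ℝ, 1 ≤ D ∧ ∃ β : ℕ, ∀ j : ℕ, ∀ x y : ℝ, 2 ≤ x → x ≤ y → y ≤ 2^j * x →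
      Ψ y ≤ D * ((j:ℝ)+1)^β * Ψ x ∧ Ψ x ≤ D * ((j:ℝ)+1)^β * Ψ y := by
  obtain ⟨A, hA1, hA⟩ := sq_iter hΨ
  have hpos := hΨ.1
  obtain ⟨β, hβ⟩ := pow_unbounded_of_one_lt A one_lt_two
  refine ⟨(4:ℝ)^β, one_le_pow₀ (by norm_num), β, fun j x y hx hxy hyx => ?_⟩
  have hx1 : (1:ℝ) ≤ x := by linarith
  -- choose p with  j+1 ≤ 2^p  and  (2:ℝ)^(p+1) ≤ 4*(j+1)
  obtain ⟨p, hp1, hp2⟩ : ∃ p : ℕ, j + 1 ≤ 2^p ∧ (2:ℝ)^(p+1) ≤ 4*((j:ℝ)+1) := by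
    rcases Nat.eq_zero_or_pos j with rfl | hj
    · exact ⟨0, by norm_num, by norm_num⟩
    · refine ⟨Nat.log 2 j + 1, Nat.lt_pow_succ_log_self one_lt_two j, ?_⟩
      have h2l : (2:ℕ)^(Nat.log 2 j) ≤ j := Nat.pow_log_le_self 2 (by omega)
      have h2l' : ((2:ℝ))^(Nat.log 2 j) ≤ (j:ℝ) := by exact_mod_cast h2l
      have hj1 : (0:ℝ) ≤ (j:ℝ) := Nat.cast_nonneg j
      rw [pow_succ, pow_succ]
      nlinarith
  have hyp : y ≤ x ^ (2^p) := by
    have t1 : (2:ℝ)^j ≤ x^j := pow_le_pow_left₀ (by norm_num) hx j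
    have t2 : x^(j+1) ≤ x^(2^p) := pow_le_pow_right₀ hx1 hp1
    have t3 : 2^j * x ≤ x^(j+1) := by
      rw [pow_succ]
      exact mul_le_mul_of_nonneg_right t1 (by linarith)
    linarith
  obtain ⟨h1, h2⟩ := hA p x y hx1 hxy hyp
  have hΨx : 0 < Ψ x := hpos x (by linarith)
  have hΨy : 0 < Ψ y := hpos y (by linarith)
  have hbound : A^(p+1) ≤ (4:ℝ)^β * ((j:ℝ)+1)^β := by
    calc A^(p+1) ≤ ((2:ℝ)^β)^(p+1) := pow_le_pow_left₀ (by linarith) hβ.le _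
      _ = ((2:ℝ)^(p+1))^β := by rw [← pow_mul, ← pow_mul, Nat.mul_comm]
      _ ≤ (4*((j:ℝ)+1))^β := pow_le_pow_left₀ (by positivity) hp2 β
      _ = (4:ℝ)^β * ((j:ℝ)+1)^β := mul_pow _ _ _
  constructor
  · calc Ψ y ≤ A^(p+1) * Ψ x := h1
      _ ≤ (4:ℝ)^β * ((j:ℝ)+1)^β * Ψ x := mul_le_mul_of_nonneg_right hbound hΨx.le
      _ = (4:ℝ)^β * (((j:ℝ)+1)^β * Ψ x) := by ring
      _ = (4:ℝ)^β * ((j:ℝ)+1)^β * Ψ x := by ring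
  · calc Ψ x ≤ A^(p+1) * Ψ y := h2
      _ ≤ (4:ℝ)^β * ((j:ℝ)+1)^β * Ψ y := mul_le_mul_of_nonneg_right hbound hΨy.le

/-- the main ratio bound: two-sided comparison over any factor `2^j`. -/
lemma ratio {Ψ : ℝ → ℝ} (hΨ : InL Ψ) :
    ∃ D : ℝ, 1 ≤ D ∧ ∃ β : ℕ, ∀ j : ℕ, ∀ x y : ℝ, 1 ≤ x → x ≤ y → y ≤ 2^j * x →
      Ψ y ≤ D * ((j:ℝ)+1)^β * Ψ x ∧ Ψ x ≤ D * ((j:ℝ)+1)^β * Ψ y := by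
  obtain ⟨D₂, hD₂, β, h2⟩ := ratio2 hΨ
  obtain ⟨E, hE, hu⟩ := unit_comp hΨ
  have hpos := hΨ.1
  have hDE : 1 ≤ D₂ * E := by nlinarith
  have hDEE : 1 ≤ D₂ * E * E := by nlinarith
  refine ⟨D₂ * E * E, hDEE, β, fun j x y hx hxy hyx => ?_⟩
  have hΨx : 0 < Ψ x := hpos x (by linarith)
  have hΨy : 0 < Ψ y := hpos y (by linarith)
  have hj0 : (0:ℝ) ≤ (j:ℝ) := Nat.cast_nonneg j
  have hj1 : (1:ℝ) ≤ ((j:ℝ)+1)^β := one_le_pow₀ (by linarith)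
  have step : ∀ u v : ℝ, 0 < Ψ v → Ψ u ≤ D₂ * E * ((j:ℝ)+1)^β * Ψ v →
      Ψ u ≤ D₂ * E * E * ((j:ℝ)+1)^β * Ψ v := by
    intro u v hv h
    have hprod : 0 ≤ D₂ * E * ((j:ℝ)+1)^β * Ψ v := by
      have : (0:ℝ) ≤ D₂ * E := by linarith
      positivity
    nlinarith [mul_nonneg hprod (sub_nonneg.2 hE)]
  by_cases hx2 : 2 ≤ x
  · obtain ⟨a, b⟩ := h2 j x y hx2 hxy hyx
    have hp : 0 ≤ D₂ * ((j:ℝ)+1)^β := by nlinarith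
    constructor
    · refine step y x hΨx ?_
      nlinarith [mul_nonneg (mul_nonneg hp hΨx.le) (sub_nonneg.2 hE)]
    · refine step x y hΨy ?_
      nlinarith [mul_nonneg (mul_nonneg hp hΨy.le) (sub_nonneg.2 hE)]
  · push_neg at hx2
    by_cases hy2 : y ≤ 2
    · have a := hu y x (by linarith) hy2 hx (by linarith)
      have b := hu x y hx (by linarith) (by linarith) hy2
      have hq : (1:ℝ) ≤ D₂ * ((j:ℝ)+1)^β := by nlinarith
      constructor
      · refine step y x hΨx ?_
        nlinarith [mul_nonneg (mul_nonneg (by linarith : (0:ℝ) ≤ E) hΨx.le)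
          (sub_nonneg.2 hq)]
      · refine step x y hΨy ?_
        nlinarith [mul_nonneg (mul_nonneg (by linarith : (0:ℝ) ≤ E) hΨy.le)
          (sub_nonneg.2 hq)]
    · push_neg at hy2
      have hyj : y ≤ 2^j * 2 := by
        have : 2^j * x ≤ 2^j * 2 :=
          mul_le_mul_of_nonneg_left (by linarith) (by positivity)
        linarith
      obtain ⟨a, b⟩ := h2 j 2 y le_rfl (by linarith) hyj
      have c := hu 2 x one_le_two le_rfl hx (by linarith)
      have d := hu x 2 hx (by linarith) one_le_two le_rfl
      have hΨ2 : 0 < Ψ 2 := hpos 2 two_pos.le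
      have hp : 0 ≤ D₂ * ((j:ℝ)+1)^β := by nlinarith
      constructor
      · refine step y x hΨx ?_
        calc Ψ y ≤ D₂ * ((j:ℝ)+1)^β * Ψ 2 := a
          _ ≤ D₂ * ((j:ℝ)+1)^β * (E * Ψ x) :=
            mul_le_mul_of_nonneg_left c hp
          _ = D₂ * E * ((j:ℝ)+1)^β * Ψ x := by ring
      · refine step x y hΨy ?_
        calc Ψ x ≤ E * Ψ 2 := d
          _ ≤ E * (D₂ * ((j:ℝ)+1)^β * Ψ y) :=
            mul_le_mul_of_nonneg_left b (by linarith)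
          _ = D₂ * E * ((j:ℝ)+1)^β * Ψ y := by ring


lemma sub_II {f : ℝ → ℝ} (h : IntervalIntegrable f volume 0 1) {a b : ℝ}
    (ha : 0 ≤ a) (hab : a ≤ b) (hb : b ≤ 1) : IntervalIntegrable f volume a b :=
  h.mono_set (by rw [uIcc_of_le hab, uIcc_of_le zero_le_one]
                 exact Icc_subset_Icc ha hb)

lemma omHat_split {f : ℝ → ℝ} (h : IntervalIntegrable f volume 0 1) {a b : ℝ}
    (ha : 0 ≤ a) (hab : a ≤ b) (hb : b ≤ 1) :
    omHat f a = (∫ s in a..b, f s) + omHat f b :=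
  (intervalIntegral.integral_add_adjacent_intervals
    (sub_II h ha hab hb) (sub_II h (by linarith) hb le_rfl)).symm

lemma int_nonneg {f : ℝ → ℝ} (hf : ∀ r ∈ Set.Ico (0:ℝ) 1, 0 ≤ f r) {a b : ℝ}
    (ha : 0 ≤ a) (hab : a ≤ b) (hb : b ≤ 1) : 0 ≤ ∫ s in a..b, f s := by
  apply intervalIntegral.integral_nonneg_of_ae_restrict hab
  have h1 : ∀ᵐ x : ℝ, x ≠ 1 := by
    rw [MeasureTheory.ae_iff]
    simpa using Real.volume_singleton (x := 1)
  filter_upwards [MeasureTheory.ae_restrict_mem measurableSet_Icc,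
    MeasureTheory.ae_restrict_of_ae h1] with x hx hx1
  exact hf x ⟨by linarith [hx.1], lt_of_le_of_ne (by linarith [hx.2]) hx1⟩

lemma omHat_nonneg {f : ℝ → ℝ} (hf : ∀ r ∈ Set.Ico (0:ℝ) 1, 0 ≤ f r) {a : ℝ}
    (ha : 0 ≤ a) (ha1 : a ≤ 1) : 0 ≤ omHat f a :=
  int_nonneg hf ha ha1 le_rfl

lemma omHat_mono {f : ℝ → ℝ} (h : IntervalIntegrable f volume 0 1)
    (hf : ∀ r ∈ Set.Ico (0:ℝ) 1, 0 ≤ f r) {a b : ℝ}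
    (ha : 0 ≤ a) (hab : a ≤ b) (hb : b ≤ 1) : omHat f b ≤ omHat f a := by
  rw [omHat_split h ha hab hb]
  linarith [int_nonneg hf ha hab hb]

open Filter in
lemma omHat_tendsto {f : ℝ → ℝ} (h : IntervalIntegrable f volume 0 1) (g : ℕ → ℝ)
    (hg : ∀ n, g n ∈ Icc (0:ℝ) 1) (hgt : Tendsto g atTop (nhds 1)) :
    Tendsto (fun n => omHat f (g n)) atTop (nhds 0) := by
  have hInt : IntegrableOn f (uIcc (0:ℝ) 1) volume := by
    rw [uIcc_of_le zero_le_one]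
    rw [integrableOn_Icc_iff_integrableOn_Ioc]
    have := intervalIntegrable_iff.mp h
    rwa [uIoc_of_le zero_le_one] at this
  have hF := intervalIntegral.continuousOn_primitive_interval hInt
  have h1mem : (1:ℝ) ∈ uIcc (0:ℝ) 1 := by
    rw [uIcc_of_le zero_le_one]; exact ⟨zero_le_one, le_rfl⟩
  have hcw := (hF 1 h1mem)
  have hgtw : Tendsto g atTop (nhdsWithin 1 (uIcc (0:ℝ) 1)) := by
    apply tendsto_nhdsWithin_of_tendsto_nhds_of_eventually_within _ hgt
    exact Filter.Eventually.of_forall fun n => by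
      rw [uIcc_of_le zero_le_one]; exact hg n
  have hcomp := hcw.tendsto.comp hgtw
  have heq : ∀ n, omHat f (g n) =
      (∫ t in (0:ℝ)..(1:ℝ), f t) - ∫ t in (0:ℝ)..(g n), f t := by
    intro n
    have := omHat_split h (le_refl 0) (hg n).1 (hg n).2
    have h2 := omHat_split h (le_refl 0) (le_refl 0) zero_le_one
    unfold omHat at *
    have : (∫ t in (0:ℝ)..(g n), f t) + ∫ s in (g n)..1, f s = ∫ s in (0:ℝ)..1, f s :=
      intervalIntegral.integral_add_adjacent_intervals
        (sub_II h le_rfl (hg n).1 (hg n).2) (sub_II h (hg n).1 (hg n).2 le_rfl)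
    linarith
  have : Tendsto (fun n => (∫ t in (0:ℝ)..(1:ℝ), f t) - ∫ t in (0:ℝ)..(g n), f t)
      atTop (nhds ((∫ t in (0:ℝ)..(1:ℝ), f t) - ∫ t in (0:ℝ)..(1:ℝ), f t)) :=
    tendsto_const_nhds.sub hcomp
  rw [sub_self] at this
  exact this.congr fun n => (heq n).symm

open Filter in
lemma exists_geom_beats (C D : ℝ) (hC : 1 < C) (hD : 1 ≤ D) (k : ℕ) :
    ∃ m : ℕ, 1 ≤ m ∧ D * (m:ℝ)^k ≤ C^m := by
  have h : ‖(1/C : ℝ)‖ < 1 := by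
    rw [Real.norm_eq_abs, abs_of_pos (by positivity)]
    rw [div_lt_one (by linarith)]; linarith
  have ht : Filter.Tendsto (fun n : ℕ => (n:ℝ)^k * (1/C)^n) atTop (nhds 0) := by
    simpa using (summable_norm_pow_mul_geometric_of_norm_lt_one (R := ℝ) k h).of_norm.tendsto_atTop_zero
  have hev := ht.eventually (eventually_le_nhds (show (0:ℝ) < 1/D by positivity))
  obtain ⟨m, hm1, hm2⟩ := (hev.and (eventually_ge_atTop 1)).exists
  refine ⟨m, hm2, ?_⟩
  have h3 : (0:ℝ) < C^m := by positivity
  have h4 : (m:ℝ)^k / C^m ≤ 1/D := by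
    rw [div_pow, one_pow, mul_one_div] at hm1; exact hm1
  have h5 := (div_le_div_iff₀ h3 (by positivity : (0:ℝ) < D)).1 h4
  nlinarith [h5]

set_option maxHeartbeats 2000000 in
theorem stmt14 (ω Ψ : ℝ → ℝ) (hnn : ∀ r ∈ Set.Ico (0:ℝ) 1, 0 ≤ ω r)
    (hint : IntervalIntegrable ω volume 0 1)
    (hD : Dhat ω ∧ Dcheck ω) (hΨ : InL Ψ) (hΨm : Measurable Ψ) :
    Dhat (fun r => Ψ (1 / (1 - r)) * ω r) ∧
      Dcheck (fun r => Ψ (1 / (1 - r)) * ω r) := by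
  classical
  set W : ℝ → ℝ := fun r => Ψ (1 / (1 - r)) * ω r with hWdef
  obtain ⟨⟨Cw, hCw1, hDhatw⟩, K, hK, C, hC, hDch⟩ := hD
  obtain ⟨D, hD1, β, hR⟩ := ratio hΨ
  have hpos := hΨ.1
  -- `W` is integrable on every `[0,a]` with `a < 1`
  have hWsub : ∀ a : ℝ, 0 ≤ a → a < 1 → IntervalIntegrable W volume 0 a := by
    intro a ha0 ha1
    obtain ⟨j, hj⟩ := pow_unbounded_of_one_lt (1/(1-a)) (one_lt_two (α := ℝ))
    rw [intervalIntegrable_iff, uIoc_of_le ha0]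
    apply MeasureTheory.Integrable.bdd_mul (c := D * ((j:ℝ)+1)^β * Ψ 1)
    · have := (sub_II hint le_rfl ha0 ha1.le)
      rw [intervalIntegrable_iff, uIoc_of_le ha0] at this
      exact this
    · exact (hΨm.comp (measurable_const.div
        (measurable_const.sub measurable_id))).aestronglyMeasurable
    · filter_upwards [MeasureTheory.ae_restrict_mem measurableSet_Ioc] with u hu
      have hu1 : u < 1 := lt_of_le_of_lt hu.2 ha1
      have h1u : (0:ℝ) < 1 - u := by linarith
      have h1a : (0:ℝ) < 1 - a := by linarith
      have hx1 : (1:ℝ) ≤ 1/(1-u) := by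
        rw [le_div_iff₀ h1u]; linarith [hu.1]
      have hle : 1/(1-u) ≤ 2^j * 1 := by
        rw [mul_one]
        calc 1/(1-u) ≤ 1/(1-a) :=
              one_div_le_one_div_of_le h1a (by linarith [hu.2])
          _ ≤ 2^j := hj.le
      have hb := (hR j 1 (1/(1-u)) le_rfl hx1 hle).1
      have hΨpos : 0 < Ψ (1/(1-u)) := hpos _ (by linarith)
      rw [Real.norm_eq_abs, abs_of_pos hΨpos]
      exact hb
  have hWnn : ∀ u ∈ Set.Ico (0:ℝ) 1, 0 ≤ W u := by
    intro u hu
    have h1u : (0:ℝ) < 1 - u := by linarith [hu.2]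
    exact mul_nonneg (hpos _ (by positivity)).le (hnn u hu)
  by_cases hW1 : IntervalIntegrable W volume 0 1
  · -- MAIN CASE
    -- dyadic step for ω's reverse doubling
    obtain ⟨j₁, hj₁K⟩ := pow_unbounded_of_one_lt K (one_lt_two (α := ℝ))
    set J : ℕ := j₁ + 1 with hJ
    have hKJ : K ≤ 2^J := by
      calc K ≤ 2^j₁ := hj₁K.le
        _ ≤ 2^J := by apply pow_le_pow_right₀ one_le_two; omega
    have hCpos : (0:ℝ) < C := by linarith
    have hstep : ∀ r ∈ Set.Ico (0:ℝ) 1, omHat ω (1 - (1-r)/2^J) ≤ (1/C) * omHat ω r := by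
      intro r hr
      have h1r : (0:ℝ) < 1 - r := by linarith [hr.2]
      have h2J : (1:ℝ) < 2^J := lt_of_lt_of_le hK hKJ
      have ha0 : 0 ≤ 1 - (1-r)/K := by
        have : (1-r)/K ≤ 1 - r := by
          rw [div_le_iff₀ (by linarith)]; nlinarith
        linarith [hr.1]
      have hab : 1 - (1-r)/K ≤ 1 - (1-r)/2^J := by
        have : (1-r)/2^J ≤ (1-r)/K :=
          div_le_div_of_nonneg_left h1r.le (by linarith) hKJ
        linarith
      have hb1 : 1 - (1-r)/2^J ≤ 1 := by
        have : 0 ≤ (1-r)/2^J := by positivity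
        linarith
      have hmono := omHat_mono hint hnn ha0 hab hb1
      have hch := hDch r hr
      have h6 : C * omHat ω (1 - (1-r)/2^J) ≤ omHat ω r := by
        nlinarith [mul_le_mul_of_nonneg_left hmono hCpos.le]
      have h7 := mul_le_mul_of_nonneg_left h6
        (le_of_lt (by positivity : (0:ℝ) < 1/C))
      calc omHat ω (1 - (1-r)/2^J)
          = (1/C) * (C * omHat ω (1 - (1-r)/2^J)) := by field_simp
        _ ≤ (1/C) * omHat ω r := h7
    have hstepn : ∀ n : ℕ, ∀ r ∈ Set.Ico (0:ℝ) 1,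
        omHat ω (1 - (1-r)/(2^J : ℝ)^n) ≤ (1/C)^n * omHat ω r := by
      intro n
      induction n with
      | zero => intro r hr; simp
      | succ n ih =>
        intro r hr
        have h1r : (0:ℝ) < 1 - r := by linarith [hr.2]
        have h2J : (1:ℝ) < 2^J := lt_of_lt_of_le hK hKJ
        have hpow : (1:ℝ) ≤ ((2:ℝ)^J)^n := one_le_pow₀ (by linarith)
        set r' := 1 - (1-r)/((2:ℝ)^J)^n with hr'
        have hr'mem : r' ∈ Set.Ico (0:ℝ) 1 := by
          constructor
          · have : (1-r)/((2:ℝ)^J)^n ≤ 1 - r := by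
              rw [div_le_iff₀ (by linarith)]; nlinarith
            simp only [hr']; linarith [hr.1]
          · have : 0 < (1-r)/((2:ℝ)^J)^n := by positivity
            simp only [hr']; linarith
        have h1r' : 1 - r' = (1-r)/((2:ℝ)^J)^n := by simp [hr']
        have key := hstep r' hr'mem
        rw [h1r'] at key
        have heq : (1-r)/((2:ℝ)^J)^n/2^J = (1-r)/((2:ℝ)^J)^(n+1) := by
          rw [div_div, ← pow_succ]
        rw [heq] at key
        calc omHat ω (1 - (1-r)/((2:ℝ)^J)^(n+1)) ≤ (1/C) * omHat ω r' := key
          _ ≤ (1/C) * ((1/C)^n * omHat ω r) :=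
              mul_le_mul_of_nonneg_left (ih r hr) (by positivity)
          _ = (1/C)^(n+1) * omHat ω r := by ring
    -- choose the boosted step
    have hJ1 : (1:ℝ) ≤ (J:ℝ) := by exact_mod_cast Nat.one_le_iff_ne_zero.2 (by omega)
    obtain ⟨m, hm1, hmC⟩ := exists_geom_beats C (2*D*(2*(J:ℝ))^β) hC
      (by nlinarith [one_le_pow₀ (show (1:ℝ) ≤ 2*(J:ℝ) by linarith) (n := β)]) β
    set q : ℕ := J * m with hq
    have hq0 : q ≠ 0 := by simp [hq]; omega
    set A₁ : ℝ := D * ((q:ℝ)+1)^β with hA₁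
    have hqcast : ((q:ℝ)) = (J:ℝ) * (m:ℝ) := by push_cast [hq]; ring
    have hm1' : (1:ℝ) ≤ (m:ℝ) := by exact_mod_cast hm1
    have hA₁1 : 1 ≤ A₁ := by
      have h1 : (1:ℝ) ≤ ((q:ℝ)+1)^β := one_le_pow₀ (by linarith [Nat.cast_nonneg (α := ℝ) q])
      nlinarith
    set C₀ : ℝ := C^m with hC₀
    have hC₀1 : 1 < C₀ := one_lt_pow₀ hC (by omega)
    have h2A₁ : 2*A₁ ≤ C₀ := by
      have hc1 : ((q:ℝ)+1) ≤ 2*(J:ℝ)*(m:ℝ) := by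
        rw [hqcast]; nlinarith
      have hc2 : ((q:ℝ)+1)^β ≤ (2*(J:ℝ))^β * (m:ℝ)^β := by
        calc ((q:ℝ)+1)^β ≤ (2*(J:ℝ)*(m:ℝ))^β :=
              pow_le_pow_left₀ (by positivity) hc1 β
          _ = (2*(J:ℝ))^β * (m:ℝ)^β := mul_pow _ _ _
      calc 2*A₁ = 2*D*((q:ℝ)+1)^β := by rw [hA₁]; ring
        _ ≤ 2*D*((2*(J:ℝ))^β * (m:ℝ)^β) := by nlinarith
        _ = 2*D*(2*(J:ℝ))^β * (m:ℝ)^β := by ring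
        _ ≤ C^m := hmC
    set K₀ : ℝ := (2:ℝ)^q with hK₀
    have hK₀1 : (1:ℝ) < K₀ := one_lt_pow₀ one_lt_two hq0
    have hstepK : ∀ n : ℕ, ∀ r ∈ Set.Ico (0:ℝ) 1,
        omHat ω (1 - (1-r)/K₀^n) ≤ (1/C₀)^n * omHat ω r := by
      intro n r hr
      have e1 : K₀^n = ((2:ℝ)^J)^(m*n) := by
        rw [hK₀, ← pow_mul, ← pow_mul, hq]; ring_nf
      have e2 : ((1:ℝ)/C₀)^n = (1/C)^(m*n) := by
        rw [hC₀, one_div, one_div, ← inv_pow, pow_mul]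
      rw [e1, e2]
      exact hstepn (m*n) r hr
    -- pointwise comparison of Ψ along a K₀-step
    have hφc : ∀ a u : ℝ, 0 ≤ a → a < 1 → a ≤ u → u ≤ 1 - (1-a)/K₀ →
        Ψ (1/(1-u)) ≤ A₁ * Ψ (1/(1-a)) ∧ Ψ (1/(1-a)) ≤ A₁ * Ψ (1/(1-u)) := by
      intro a u ha0 ha1 hau hu
      have h1a : (0:ℝ) < 1 - a := by linarith
      have hK₀pos : (0:ℝ) < K₀ := by linarith
      have h3 : 0 < (1-a)/K₀ := by positivity
      have h1u : (0:ℝ) < 1 - u := by linarith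
      have hX1 : 1 ≤ 1/(1-a) := by rw [le_div_iff₀ h1a]; linarith
      have hXY : 1/(1-a) ≤ 1/(1-u) := one_div_le_one_div_of_le h1u (by linarith)
      have hYK : 1/(1-u) ≤ 2^q * (1/(1-a)) := by
        calc 1/(1-u) ≤ 1/((1-a)/K₀) := one_div_le_one_div_of_le h3 (by linarith)
          _ = K₀ * (1/(1-a)) := by field_simp
          _ = 2^q * (1/(1-a)) := by rw [hK₀]
      exact ⟨(hR q _ _ hX1 hXY hYK).1, (hR q _ _ hX1 hXY hYK).2⟩
    have hK₀pos : (0:ℝ) < K₀ := by linarith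
    -- sequence membership facts
    have hsmem : ∀ (r : ℝ), r ∈ Set.Ico (0:ℝ) 1 → ∀ n : ℕ,
        (1 - (1-r)/K₀^n) ∈ Set.Ico (0:ℝ) 1 ∧ r ≤ 1 - (1-r)/K₀^n := by
      intro r hr n
      have h1r : (0:ℝ) < 1 - r := by linarith [hr.2]
      have hp1 : (1:ℝ) ≤ K₀^n := one_le_pow₀ (by linarith)
      have hle : (1-r)/K₀^n ≤ 1 - r := by
        rw [div_le_iff₀ (by linarith)]; nlinarith
      have hpos' : 0 < (1-r)/K₀^n := by positivity
      exact ⟨⟨by linarith [hr.1], by linarith⟩, by linarith⟩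
    -- iterated Ψ growth bound along the sequence
    have hφs : ∀ (r : ℝ), r ∈ Set.Ico (0:ℝ) 1 → ∀ n : ℕ,
        Ψ (1/(1-(1 - (1-r)/K₀^n))) ≤ A₁^n * Ψ (1/(1-r)) := by
      intro r hr n
      induction n with
      | zero =>
        have h0 : 1 - (1-r)/K₀^0 = r := by simp
        rw [h0, pow_zero, one_mul]
      | succ n ih =>
        have h1r : (0:ℝ) < 1 - r := by linarith [hr.2]
        obtain ⟨ham, har⟩ := hsmem r hr n
        set a := 1 - (1-r)/K₀^n with ha
        have h1a : 1 - a = (1-r)/K₀^n := by rw [ha]; ring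
        have h1apos : 0 < 1 - a := by rw [h1a]; positivity
        have hau : a ≤ 1 - (1-a)/K₀ := by
          have h2 : (1-a)/K₀ ≤ 1-a := by
            rw [div_le_iff₀ hK₀pos]; nlinarith
          linarith
        have hcomp := (hφc a (1 - (1-a)/K₀) ham.1 (by linarith) hau le_rfl).1
        have heq : 1 - (1-a)/K₀ = 1 - (1-r)/K₀^(n+1) := by
          rw [h1a, div_div, ← pow_succ]
        rw [heq] at hcomp
        calc Ψ (1/(1-(1 - (1-r)/K₀^(n+1)))) ≤ A₁ * Ψ (1/(1-a)) := hcomp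
          _ ≤ A₁ * (A₁^n * Ψ (1/(1-r))) :=
              mul_le_mul_of_nonneg_left ih (by linarith)
          _ = A₁^(n+1) * Ψ (1/(1-r)) := by ring
    -- KEY UPPER BOUND
    have hupper : ∀ r ∈ Set.Ico (0:ℝ) 1,
        omHat W r ≤ 2*A₁ * (Ψ (1/(1-r)) * omHat ω r) := by
      intro r hr
      have h1r : (0:ℝ) < 1 - r := by linarith [hr.2]
      have hΨr : 0 < Ψ (1/(1-r)) := hpos _ (by positivity)
      have homr : 0 ≤ omHat ω r := omHat_nonneg hnn hr.1 hr.2.le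
      have hQ0 : 0 ≤ Ψ (1/(1-r)) * omHat ω r := mul_nonneg hΨr.le homr
      have hA₁0 : (0:ℝ) ≤ A₁ := by linarith
      have habn : ∀ n : ℕ, (1 - (1-r)/K₀^n) ≤ (1 - (1-r)/K₀^(n+1)) := by
        intro n
        have : (1-r)/K₀^(n+1) ≤ (1-r)/K₀^n :=
          div_le_div_of_nonneg_left h1r.le (by positivity)
            (pow_le_pow_right₀ (by linarith) (by omega))
        linarith
      have hchunk : ∀ n : ℕ,
          (∫ u in (1 - (1-r)/K₀^n)..(1 - (1-r)/K₀^(n+1)), W u)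
            ≤ A₁ * (Ψ (1/(1-r)) * omHat ω r) * (1/2)^n := by
        intro n
        obtain ⟨hanm, harn⟩ := hsmem r hr n
        obtain ⟨hbnm, hbrn⟩ := hsmem r hr (n+1)
        set a := 1 - (1-r)/K₀^n with ha
        set b := 1 - (1-r)/K₀^(n+1) with hb
        have h1a : 1 - a = (1-r)/K₀^n := by rw [ha]; ring
        have hab : a ≤ b := habn n
        have hbK : b = 1 - (1-a)/K₀ := by
          rw [h1a, div_div, ← pow_succ, hb]
        have hφa0 : 0 < Ψ (1/(1-a)) := by
          have h1apos : 0 < 1 - a := by rw [h1a]; positivity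
          exact hpos _ (by positivity)
        have hB0 : 0 ≤ A₁ * Ψ (1/(1-a)) := mul_nonneg hA₁0 hφa0.le
        have hmono1 : ∀ u ∈ Set.Icc a b, W u ≤ (A₁ * Ψ (1/(1-a))) * ω u := by
          intro u hu
          have hu1 : u < 1 := lt_of_le_of_lt hu.2 hbnm.2
          have hωu : 0 ≤ ω u := hnn u ⟨le_trans hanm.1 hu.1, hu1⟩
          have hφu := (hφc a u hanm.1 (by
            have h1apos : 0 < 1 - a := by rw [h1a]; positivity
            linarith) hu.1 (by rw [← hbK]; exact hu.2)).1
          calc W u = Ψ (1/(1-u)) * ω u := rfl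
            _ ≤ (A₁ * Ψ (1/(1-a))) * ω u := mul_le_mul_of_nonneg_right hφu hωu
        have hIW : IntervalIntegrable W volume a b := sub_II hW1 hanm.1 hab hbnm.2.le
        have hIg : IntervalIntegrable (fun u => (A₁ * Ψ (1/(1-a))) * ω u) volume a b :=
          (sub_II hint hanm.1 hab hbnm.2.le).const_mul _
        have hint1 := intervalIntegral.integral_mono_on hab hIW hIg hmono1
        rw [intervalIntegral.integral_const_mul] at hint1
        have hsplitω : (∫ u in a..b, ω u) = omHat ω a - omHat ω b := by
          have := omHat_split hint hanm.1 hab hbnm.2.le; linarith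
        rw [hsplitω] at hint1
        have hωa : omHat ω a ≤ (1/C₀)^n * omHat ω r := hstepK n r hr
        have hωa0 : 0 ≤ omHat ω a := omHat_nonneg hnn hanm.1 hanm.2.le
        have hωb0 : 0 ≤ omHat ω b := omHat_nonneg hnn hbnm.1 hbnm.2.le
        have hφa : Ψ (1/(1-a)) ≤ A₁^n * Ψ (1/(1-r)) := hφs r hr n
        have hstep2 : (A₁ * Ψ (1/(1-a))) * (omHat ω a - omHat ω b)
            ≤ (A₁ * (A₁^n * Ψ (1/(1-r)))) * ((1/C₀)^n * omHat ω r) := by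
          have t1 : (A₁ * Ψ (1/(1-a))) * (omHat ω a - omHat ω b)
              ≤ (A₁ * Ψ (1/(1-a))) * omHat ω a :=
            mul_le_mul_of_nonneg_left (by linarith) hB0
          have t2 : (A₁ * Ψ (1/(1-a))) * omHat ω a
              ≤ (A₁ * (A₁^n * Ψ (1/(1-r)))) * ((1/C₀)^n * omHat ω r) :=
            mul_le_mul (mul_le_mul_of_nonneg_left hφa hA₁0) hωa hωa0
              (mul_nonneg hA₁0 (mul_nonneg (pow_nonneg hA₁0 n) hΨr.le))
          linarith
        have hhalf : A₁^n * (1/C₀)^n ≤ (1/2:ℝ)^n := by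
          have hq2 : A₁ * (1/C₀) ≤ 1/2 := by
            rw [mul_one_div, div_le_div_iff₀ (by linarith) two_pos]
            linarith
          calc A₁^n * (1/C₀)^n = (A₁*(1/C₀))^n := (mul_pow _ _ _).symm
            _ ≤ (1/2:ℝ)^n := pow_le_pow_left₀ (by positivity) hq2 n
        have hfinal : (A₁ * (A₁^n * Ψ (1/(1-r)))) * ((1/C₀)^n * omHat ω r)
            ≤ A₁ * (Ψ (1/(1-r)) * omHat ω r) * (1/2)^n := by
          calc (A₁ * (A₁^n * Ψ (1/(1-r)))) * ((1/C₀)^n * omHat ω r)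
              = (A₁ * (Ψ (1/(1-r)) * omHat ω r)) * (A₁^n * (1/C₀)^n) := by ring
            _ ≤ (A₁ * (Ψ (1/(1-r)) * omHat ω r)) * (1/2)^n :=
                mul_le_mul_of_nonneg_left hhalf (mul_nonneg hA₁0 hQ0)
            _ = A₁ * (Ψ (1/(1-r)) * omHat ω r) * (1/2)^n := by ring
        linarith
      have hNsum : ∀ N : ℕ, omHat W r ≤
          (∑ n ∈ Finset.range N, A₁ * (Ψ (1/(1-r)) * omHat ω r) * (1/2)^n)
            + omHat W (1 - (1-r)/K₀^N) := by
        intro N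
        induction N with
        | zero => simp
        | succ N ih =>
          have hsplit := omHat_split hW1 (hsmem r hr N).1.1 (habn N)
            (hsmem r hr (N+1)).1.2.le
          rw [Finset.sum_range_succ]
          linarith [hchunk N]
      have hsum2 : ∀ N : ℕ, (∑ n ∈ Finset.range N,
          A₁ * (Ψ (1/(1-r)) * omHat ω r) * (1/2)^n)
            ≤ 2 * (A₁ * (Ψ (1/(1-r)) * omHat ω r)) := by
        intro N
        have e1 : (∑ n ∈ Finset.range N, A₁ * (Ψ (1/(1-r)) * omHat ω r) * (1/2)^n)
            = (A₁ * (Ψ (1/(1-r)) * omHat ω r)) * ∑ n ∈ Finset.range N, (1/2:ℝ)^n := by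
          rw [Finset.mul_sum]
        rw [e1]
        have := sum_geometric_two_le N
        nlinarith [mul_nonneg hA₁0 hQ0]
      have htail : Filter.Tendsto (fun N : ℕ => omHat W (1 - (1-r)/K₀^N))
          Filter.atTop (nhds 0) := by
        apply omHat_tendsto hW1
        · intro n; exact ⟨(hsmem r hr n).1.1, (hsmem r hr n).1.2.le⟩
        · have h2 : Filter.Tendsto (fun N : ℕ => (1-r) * (1/K₀)^N)
              Filter.atTop (nhds 0) := by
            have h3 := tendsto_pow_atTop_nhds_zero_of_lt_one
              (by positivity : (0:ℝ) ≤ 1/K₀)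
              (by rw [div_lt_one (by linarith)]; linarith)
            simpa using h3.const_mul (1-r)
          have heq : (fun N : ℕ => 1 - (1-r)/K₀^N)
              = fun N : ℕ => 1 - (1-r)*(1/K₀)^N := by
            funext N
            rw [div_pow, one_pow, mul_one_div]
          rw [heq]
          have := tendsto_const_nhds (x := (1:ℝ)) (f := Filter.atTop (α := ℕ)) |>.sub h2
          simpa using this
      have hfin : Filter.Tendsto
          (fun N : ℕ => 2 * (A₁ * (Ψ (1/(1-r)) * omHat ω r)) + omHat W (1 - (1-r)/K₀^N))
          Filter.atTop (nhds (2 * (A₁ * (Ψ (1/(1-r)) * omHat ω r)))) := by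
        simpa using (tendsto_const_nhds (x := 2 * (A₁ * (Ψ (1/(1-r)) * omHat ω r)))
          (f := Filter.atTop (α := ℕ))).add htail
      have hle := ge_of_tendsto hfin (Filter.Eventually.of_forall fun N => by
        show omHat W r ≤ 2 * (A₁ * (Ψ (1/(1-r)) * omHat ω r)) + omHat W (1 - (1-r)/K₀^N)
        linarith [hNsum N, hsum2 N])
      linarith
    -- KEY LOWER BOUND
    have hlower : ∀ r ∈ Set.Ico (0:ℝ) 1,
        (1 - 1/C₀) * (Ψ (1/(1-r)) * omHat ω r) ≤ A₁ * omHat W r := by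
      intro r hr
      have h1r : (0:ℝ) < 1 - r := by linarith [hr.2]
      have hA₁0 : (0:ℝ) ≤ A₁ := by linarith
      set t := 1 - (1-r)/K₀ with ht
      have htm : t ∈ Set.Ico (0:ℝ) 1 ∧ r ≤ t := by
        have h := hsmem r hr 1
        rwa [pow_one, ← ht] at h
      have hΨr : 0 < Ψ (1/(1-r)) := hpos _ (by positivity)
      have hmono1 : ∀ u ∈ Set.Icc r t, Ψ (1/(1-r)) * ω u ≤ A₁ * W u := by
        intro u hu
        have hu1 : u < 1 := lt_of_le_of_lt hu.2 htm.1.2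
        have hωu : 0 ≤ ω u := hnn u ⟨le_trans hr.1 hu.1, hu1⟩
        have hφu := (hφc r u hr.1 hr.2 hu.1 (by rw [← ht]; exact hu.2)).2
        calc Ψ (1/(1-r)) * ω u ≤ (A₁ * Ψ (1/(1-u))) * ω u :=
              mul_le_mul_of_nonneg_right hφu hωu
          _ = A₁ * (Ψ (1/(1-u)) * ω u) := by ring
          _ = A₁ * W u := rfl
      have hIf : IntervalIntegrable (fun u => Ψ (1/(1-r)) * ω u) volume r t :=
        (sub_II hint hr.1 htm.2 htm.1.2.le).const_mul _
      have hIg : IntervalIntegrable (fun u => A₁ * W u) volume r t :=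
        (sub_II hW1 hr.1 htm.2 htm.1.2.le).const_mul _
      have hint1 := intervalIntegral.integral_mono_on htm.2 hIf hIg hmono1
      rw [intervalIntegral.integral_const_mul, intervalIntegral.integral_const_mul] at hint1
      have hsplitω : (∫ u in r..t, ω u) = omHat ω r - omHat ω t := by
        have := omHat_split hint hr.1 htm.2 htm.1.2.le; linarith
      have hsplitW : (∫ u in r..t, W u) = omHat W r - omHat W t := by
        have := omHat_split hW1 hr.1 htm.2 htm.1.2.le; linarith
      rw [hsplitω, hsplitW] at hint1
      have hωt : omHat ω t ≤ (1/C₀) * omHat ω r := by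
        have h := hstepK 1 r hr
        rwa [pow_one, pow_one, ← ht] at h
      have hWt : 0 ≤ omHat W t := omHat_nonneg hWnn htm.1.1 htm.1.2.le
      have hωr : 0 ≤ omHat ω r := omHat_nonneg hnn hr.1 hr.2.le
      have k1 : (1 - 1/C₀) * (Ψ (1/(1-r)) * omHat ω r)
          ≤ Ψ (1/(1-r)) * (omHat ω r - omHat ω t) := by
        nlinarith [mul_le_mul_of_nonneg_left hωt hΨr.le]
      nlinarith [mul_le_mul_of_nonneg_left hWt hA₁0]
    have hδ : 0 < 1 - 1/C₀ := by
      have h1 : 1/C₀ < 1 := by rw [div_lt_one (by linarith)]; linarith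
      linarith
    have hQle : ∀ r ∈ Set.Ico (0:ℝ) 1,
        Ψ (1/(1-r)) * omHat ω r ≤ (A₁ / (1 - 1/C₀)) * omHat W r := by
      intro r hr
      have h := hlower r hr
      rw [div_mul_eq_mul_div, le_div_iff₀ hδ]
      linarith
    have hA₁0 : (0:ℝ) ≤ A₁ := by linarith
    have hAδ0 : (0:ℝ) ≤ A₁ / (1 - 1/C₀) := by positivity
    constructor
    · -- Dhat for W
      set A₂ : ℝ := D * 2^β with hA₂
      have hA₂0 : (0:ℝ) ≤ A₂ := by positivity
      refine ⟨max 1 (2*A₁*(Cw*A₂)*(A₁/(1-1/C₀))), le_max_left _ _, fun r hr => ?_⟩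
      have h1r : (0:ℝ) < 1 - r := by linarith [hr.2]
      have hr'm : (1+r)/2 ∈ Set.Ico (0:ℝ) 1 :=
        ⟨by linarith [hr.1], by linarith [hr.2]⟩
      have h1r' : (0:ℝ) < 1 - (1+r)/2 := by linarith [hr.2]
      have hΨr' : 0 < Ψ (1/(1-(1+r)/2)) := hpos _ (by positivity)
      have hφmid : Ψ (1/(1-r)) ≤ A₂ * Ψ (1/(1-(1+r)/2)) := by
        have heq : 1/(1-(1+r)/2) = 2 * (1/(1-r)) := by
          rw [mul_one_div]
          rw [div_eq_div_iff h1r'.ne' h1r.ne']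
          ring
        have hX1 : (1:ℝ) ≤ 1/(1-r) := by rw [le_div_iff₀ h1r]; linarith [hr.1]
        have h := (hR 1 (1/(1-r)) (2*(1/(1-r))) hX1 (by linarith)
          (by rw [pow_one])).2
        rw [← heq] at h
        have hcast : D * (((1:ℕ):ℝ)+1)^β = A₂ := by norm_num [hA₂]
        rwa [hcast] at h
      have homr : 0 ≤ omHat ω r := omHat_nonneg hnn hr.1 hr.2.le
      have homr' : 0 ≤ omHat W ((1+r)/2) := omHat_nonneg hWnn hr'm.1 hr'm.2.le
      calc omHat W r ≤ 2*A₁ * (Ψ (1/(1-r)) * omHat ω r) := hupper r hr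
        _ ≤ 2*A₁ * ((A₂ * Ψ (1/(1-(1+r)/2))) * (Cw * omHat ω ((1+r)/2))) := by
            apply mul_le_mul_of_nonneg_left _ (by linarith : (0:ℝ) ≤ 2*A₁)
            exact mul_le_mul hφmid (hDhatw r hr) homr
              (mul_nonneg hA₂0 hΨr'.le)
        _ = (2*A₁*(Cw*A₂)) * (Ψ (1/(1-(1+r)/2)) * omHat ω ((1+r)/2)) := by ring
        _ ≤ (2*A₁*(Cw*A₂)) * ((A₁/(1-1/C₀)) * omHat W ((1+r)/2)) := by
            apply mul_le_mul_of_nonneg_left (hQle _ hr'm)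
            positivity
        _ = (2*A₁*(Cw*A₂)*(A₁/(1-1/C₀))) * omHat W ((1+r)/2) := by ring
        _ ≤ max 1 (2*A₁*(Cw*A₂)*(A₁/(1-1/C₀))) * omHat W ((1+r)/2) :=
            mul_le_mul_of_nonneg_right (le_max_right _ _) homr'
    · -- Dcheck for W
      obtain ⟨p, hp⟩ := pow_unbounded_of_one_lt (2*A₁*(A₁/(1-1/C₀)))
        (one_lt_two (α := ℝ))
      refine ⟨K₀^(p+1), one_lt_pow₀ hK₀1 (by omega), 2, one_lt_two, fun r hr => ?_⟩
      have h1r : (0:ℝ) < 1 - r := by linarith [hr.2]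
      have hΨr : 0 < Ψ (1/(1-r)) := hpos _ (by positivity)
      have homr : 0 ≤ omHat ω r := omHat_nonneg hnn hr.1 hr.2.le
      have hQ0 : 0 ≤ Ψ (1/(1-r)) * omHat ω r := mul_nonneg hΨr.le homr
      obtain ⟨htm, hrt⟩ := hsmem r hr (p+1)
      have hup := hupper _ htm
      have hφt := hφs r hr (p+1)
      have hωt := hstepK (p+1) r hr
      have hΨt : 0 < Ψ (1/(1-(1 - (1-r)/K₀^(p+1)))) := by
        have h1t : (0:ℝ) < 1 - (1 - (1-r)/K₀^(p+1)) := by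
          have : (0:ℝ) < (1-r)/K₀^(p+1) := by positivity
          linarith
        exact hpos _ (by positivity)
      have hωt0 : 0 ≤ omHat ω (1 - (1-r)/K₀^(p+1)) :=
        omHat_nonneg hnn htm.1 htm.2.le
      have hhalf : A₁^(p+1) * (1/C₀)^(p+1) ≤ (1/2:ℝ)^(p+1) := by
        have hq2 : A₁ * (1/C₀) ≤ 1/2 := by
          rw [mul_one_div, div_le_div_iff₀ (by linarith) two_pos]
          linarith
        calc A₁^(p+1) * (1/C₀)^(p+1) = (A₁*(1/C₀))^(p+1) := (mul_pow _ _ _).symm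
          _ ≤ (1/2:ℝ)^(p+1) := pow_le_pow_left₀ (by positivity) hq2 _
      have hkey : Ψ (1/(1-(1 - (1-r)/K₀^(p+1)))) * omHat ω (1 - (1-r)/K₀^(p+1))
          ≤ (1/2:ℝ)^(p+1) * (Ψ (1/(1-r)) * omHat ω r) := by
        calc Ψ (1/(1-(1 - (1-r)/K₀^(p+1)))) * omHat ω (1 - (1-r)/K₀^(p+1))
            ≤ (A₁^(p+1) * Ψ (1/(1-r))) * ((1/C₀)^(p+1) * omHat ω r) :=
              mul_le_mul hφt hωt hωt0
                (mul_nonneg (pow_nonneg hA₁0 _) hΨr.le)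
          _ = (A₁^(p+1) * (1/C₀)^(p+1)) * (Ψ (1/(1-r)) * omHat ω r) := by ring
          _ ≤ (1/2:ℝ)^(p+1) * (Ψ (1/(1-r)) * omHat ω r) :=
              mul_le_mul_of_nonneg_right hhalf hQ0
      have hQW := hQle r hr
      have hWr0 : 0 ≤ omHat W r := omHat_nonneg hWnn hr.1 hr.2.le
      -- numeric: 2*A₁ * (1/2)^(p+1) * (A₁/(1-1/C₀)) ≤ 1/2
      have hnum : 2*A₁ * ((1/2:ℝ)^(p+1) * (A₁/(1-1/C₀))) ≤ (1/2:ℝ) := by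
        have h2p : (0:ℝ) < 2^p := by positivity
        have he : (1/2:ℝ)^(p+1) = 1/(2*2^p) := by
          rw [div_pow, one_pow, pow_succ]; ring_nf
        rw [he]
        have hh : 2*A₁*(A₁/(1-1/C₀)) ≤ 2^p := hp.le
        have hpos2 : (0:ℝ) < 2*2^p := by positivity
        have he2 : 2*A₁*(1/(2*2^p)*(A₁/(1-1/C₀)))
            = (2*A₁*(A₁/(1-1/C₀)))/(2*2^p) := by ring
        rw [he2, div_le_iff₀ hpos2]
        calc 2*A₁*(A₁/(1-1/C₀)) ≤ 2^p := hh
          _ = 1/2 * (2*2^p) := by ring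
      calc 2 * omHat W (1 - (1-r)/K₀^(p+1))
          ≤ 2 * (2*A₁ * (Ψ (1/(1-(1 - (1-r)/K₀^(p+1)))) * omHat ω (1 - (1-r)/K₀^(p+1)))) := by
            linarith [hup]
        _ ≤ 2 * (2*A₁ * ((1/2:ℝ)^(p+1) * (Ψ (1/(1-r)) * omHat ω r))) := by
            have := mul_le_mul_of_nonneg_left hkey (by linarith : (0:ℝ) ≤ 2*A₁)
            linarith
        _ ≤ 2 * (2*A₁ * ((1/2:ℝ)^(p+1) * ((A₁/(1-1/C₀)) * omHat W r))) := by
            have h3 : (0:ℝ) ≤ 2*A₁ * (1/2:ℝ)^(p+1) := by positivity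
            have := mul_le_mul_of_nonneg_left hQW h3
            nlinarith [this]
        _ = (2*A₁ * ((1/2:ℝ)^(p+1) * (A₁/(1-1/C₀)))) * (2 * omHat W r) := by ring
        _ ≤ (1/2:ℝ) * (2 * omHat W r) := by
            apply mul_le_mul_of_nonneg_right hnum
            linarith
        _ = omHat W r := by ring
  · -- trivial case : all tails vanish
    have hzero : ∀ a ∈ Set.Ico (0:ℝ) 1, omHat W a = 0 := by
      intro a ha
      apply intervalIntegral.integral_undef
      intro hcon
      exact hW1 ((hWsub a ha.1 ha.2).trans hcon)
    constructor
    · refine ⟨1, le_rfl, fun r hr => ?_⟩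
      rw [hzero r hr, hzero ((1+r)/2) ⟨by linarith [hr.1], by linarith [hr.2]⟩]
      norm_num
    · refine ⟨2, one_lt_two, 2, one_lt_two, fun r hr => ?_⟩
      rw [hzero r hr, hzero (1 - (1-r)/2) ⟨by linarith [hr.1, hr.2], by linarith [hr.1, hr.2]⟩]
      norm_num
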